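/- arXiv:0801.3642 — 4 statements merged into one kernel-verified Lean document; each statement's English description precedes it below -/
import Mathlib

section
/- Let P = {k, p_1, ..., p_n} with n ≥ 2, and let Γ_n be the access structure with minimal qualified sets {k, p_i} for 1 ≤ i ≤ n and {p_1, ..., p_n} (a set is qualified iff it contains one of these). Suppose h is a real-valued function on subsets of P ∪ {S} satisfying: h(∅) = 0; monotonicity (X ⊆ Y implies h(X) ≤ h(Y)); submodularity (h(X) + h(Y) ≥ h(X ∩ Y) + h(X ∪ Y)); and +-submodularity (if X, Y ∈ Γ_n and X ∩ Y ∉ Γ_n then h(X) + h(Y) ≥ h(X ∩ Y) + h(X ∪ Y) + 1, where membership in Γ_n refers to subsets of P). Then h({k, p_1, ..., p_{n-1}}) ≥ h({p_1}) + (n - 1). -/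
/-- A subset of the participants is qualified in the king-and-`n`-pawns access
structure iff it contains the king together with some pawn `p i` (`1 ≤ i ≤ n`),
or it contains all the pawns. -/
def Qualified {α : Type*} [DecidableEq α] (n : ℕ) (k : α) (p : ℕ → α)
    (X : Finset α) : Prop :=
  (∃ i, 1 ≤ i ∧ i ≤ n ∧ k ∈ X ∧ p i ∈ X) ∨ (Finset.Icc 1 n).image p ⊆ X

theorem lemma_down {α : Type*} [DecidableEq α] (n : ℕ) (hn : 2 ≤ n)
    (k : α) (p : ℕ → α)
    (hkp : ∀ i, 1 ≤ i → i ≤ n → k ≠ p i)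
    (hpinj : ∀ i j, 1 ≤ i → i ≤ n → 1 ≤ j → j ≤ n → p i = p j → i = j)
    (h : Finset α → ℝ)
    (h0 : h ∅ = 0)
    (hmono : ∀ X Y : Finset α, X ⊆ Y → h X ≤ h Y)
    (hsub : ∀ X Y : Finset α, h X + h Y ≥ h (X ∩ Y) + h (X ∪ Y))
    (hpsub : ∀ X Y : Finset α,
      X ⊆ insert k ((Finset.Icc 1 n).image p) →
      Y ⊆ insert k ((Finset.Icc 1 n).image p) →
      Qualified n k p X → Qualified n k p Y → ¬ Qualified n k p (X ∩ Y) →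
      h X + h Y ≥ h (X ∩ Y) + h (X ∪ Y) + 1) :
    h (insert k ((Finset.Icc 1 (n - 1)).image p)) ≥ h {p 1} + ((n : ℝ) - 1) := by
  classical
  set Pw : Finset α := (Finset.Icc 1 n).image p with hPwdef
  set U : ℕ → Finset α := fun j => (Finset.Icc 1 j).image p with hUdef
  set W : ℕ → Finset α := fun m => ((Finset.Icc 1 n).erase m).image p with hWdef
  -- k is not a pawn image
  have hkPw : k ∉ Pw := by
    intro hk
    obtain ⟨i, hi, hip⟩ := Finset.mem_image.mp hk
    rw [Finset.mem_Icc] at hi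
    exact hkp i hi.1 hi.2 hip.symm
  have hWsub : ∀ m, W m ⊆ Pw := by
    intro m
    exact Finset.image_subset_image (Finset.erase_subset _ _)
  have hUsub : ∀ j, j ≤ n → U j ⊆ Pw := by
    intro j hj
    apply Finset.image_subset_image
    exact Finset.Icc_subset_Icc_right hj
  -- the key +-submodularity consequence: removing a pawn from the set of all
  -- pawns drops h by at least 1.
  have lemW : ∀ m, 1 ≤ m → m ≤ n → h Pw ≥ h (W m) + 1 := by
    intro m hm1 hmn
    -- pick a pawn index different from m
    obtain ⟨i0, hi01, hi0n, hi0m⟩ : ∃ i0, 1 ≤ i0 ∧ i0 ≤ n ∧ i0 ≠ m := by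
      by_cases hm : m = 1
      · exact ⟨2, by omega, by omega, by omega⟩
      · exact ⟨1, le_refl 1, by omega, by omega⟩
    have hi0W : p i0 ∈ W m := by
      apply Finset.mem_image_of_mem
      rw [Finset.mem_erase, Finset.mem_Icc]
      exact ⟨hi0m, hi01, hi0n⟩
    set X : Finset α := insert k (W m) with hXdef
    have hXsub : X ⊆ insert k Pw := Finset.insert_subset_insert _ (hWsub m)
    have hXq : Qualified n k p X := by
      left
      exact ⟨i0, hi01, hi0n, Finset.mem_insert_self _ _,
        Finset.mem_insert_of_mem hi0W⟩
    have hYq : Qualified n k p Pw := Or.inr (le_refl _)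
    have hint : X ∩ Pw = W m := by
      ext a
      simp only [Finset.mem_inter, hXdef, Finset.mem_insert]
      constructor
      · rintro ⟨hak | haW, haPw⟩
        · exact absurd (hak ▸ haPw) hkPw
        · exact haW
      · intro haW
        exact ⟨Or.inr haW, hWsub m haW⟩
    have hmW : p m ∉ W m := by
      intro hpm
      obtain ⟨b, hb, hbm⟩ := Finset.mem_image.mp hpm
      rw [Finset.mem_erase, Finset.mem_Icc] at hb
      exact hb.1 (hpinj b m hb.2.1 hb.2.2 hm1 hmn hbm)
    have hnq : ¬ Qualified n k p (X ∩ Pw) := by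
      rw [hint]
      intro hq
      rcases hq with ⟨i, _, _, hkW, _⟩ | hall
      · obtain ⟨b, hb, hbk⟩ := Finset.mem_image.mp hkW
        rw [Finset.mem_erase, Finset.mem_Icc] at hb
        exact hkp b hb.2.1 hb.2.2 hbk.symm
      · apply hmW
        apply hall
        apply Finset.mem_image_of_mem
        rw [Finset.mem_Icc]; exact ⟨hm1, hmn⟩
    have hps := hpsub X Pw hXsub (Finset.subset_insert _ _) hXq hYq hnq
    have hm1' : h X ≤ h (X ∪ Pw) := hmono _ _ Finset.subset_union_left
    rw [hint] at hps
    linarith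
  -- step: h (U (j+1)) ≥ h (U j) + 1 for 1 ≤ j+1 ≤ n
  have lemStep : ∀ j, j + 1 ≤ n → h (U (j + 1)) ≥ h (U j) + 1 := by
    intro j hj
    have hint : U (j + 1) ∩ W (j + 1) = U j := by
      ext a
      simp only [Finset.mem_inter, hUdef, hWdef, Finset.mem_image,
        Finset.mem_erase, Finset.mem_Icc]
      constructor
      · rintro ⟨⟨b, ⟨hb1, hb2⟩, hba⟩, ⟨c, ⟨hc0, hc1, hc2⟩, hca⟩⟩
        have hbc : b = c := hpinj b c hb1 (by omega) hc1 hc2 (by rw [hba, hca])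
        exact ⟨b, ⟨hb1, by omega⟩, hba⟩
      · rintro ⟨b, ⟨hb1, hb2⟩, hba⟩
        refine ⟨⟨b, ⟨hb1, by omega⟩, hba⟩, ⟨b, ⟨by omega, hb1, by omega⟩, hba⟩⟩
    have hun : U (j + 1) ∪ W (j + 1) = Pw := by
      ext a
      simp only [Finset.mem_union, hUdef, hWdef, hPwdef, Finset.mem_image,
        Finset.mem_erase, Finset.mem_Icc]
      constructor
      · rintro (⟨b, ⟨hb1, hb2⟩, hba⟩ | ⟨b, ⟨_, hb1, hb2⟩, hba⟩)
        · exact ⟨b, ⟨hb1, by omega⟩, hba⟩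
        · exact ⟨b, ⟨hb1, hb2⟩, hba⟩
      · rintro ⟨b, ⟨hb1, hb2⟩, hba⟩
        by_cases hbj : b = j + 1
        · exact Or.inl ⟨b, ⟨hb1, by omega⟩, hba⟩
        · exact Or.inr ⟨b, ⟨hbj, hb1, hb2⟩, hba⟩
    have hsub' := hsub (U (j + 1)) (W (j + 1))
    rw [hint, hun] at hsub'
    have hW' := lemW (j + 1) (by omega) hj
    linarith
  -- chain: h (U j) ≥ h (U 1) + (j - 1)
  have chain : ∀ j, 1 ≤ j → j ≤ n → h (U j) ≥ h (U 1) + ((j : ℝ) - 1) := by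
    intro j
    induction j with
    | zero => intro hj; omega
    | succ m ih =>
      intro _ hmn
      by_cases hm : m = 0
      · subst hm; simp
      · have hih := ih (by omega) (by omega)
        have hstep := lemStep m (by omega)
        push_cast
        linarith
  -- final application of +-submodularity with the king
  have hn1 : (1 : ℕ) ≤ n - 1 := by omega
  set X : Finset α := insert k (U (n - 1)) with hXdef
  have hXsub : X ⊆ insert k Pw :=
    Finset.insert_subset_insert _ (hUsub (n - 1) (by omega))
  have hp1U : p 1 ∈ U (n - 1) := by
    apply Finset.mem_image_of_mem
    rw [Finset.mem_Icc]; exact ⟨le_refl 1, hn1⟩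
  have hXq : Qualified n k p X := by
    left
    exact ⟨1, le_refl 1, by omega, Finset.mem_insert_self _ _,
      Finset.mem_insert_of_mem hp1U⟩
  have hint : X ∩ Pw = U (n - 1) := by
    ext a
    simp only [Finset.mem_inter, hXdef, Finset.mem_insert]
    constructor
    · rintro ⟨hak | haU, haPw⟩
      · exact absurd (hak ▸ haPw) hkPw
      · exact haU
    · intro haU
      exact ⟨Or.inr haU, hUsub (n - 1) (by omega) haU⟩
  have hnq : ¬ Qualified n k p (X ∩ Pw) := by
    rw [hint]
    intro hq
    rcases hq with ⟨i, _, _, hkU, _⟩ | hall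
    · obtain ⟨b, hb, hbk⟩ := Finset.mem_image.mp hkU
      rw [Finset.mem_Icc] at hb
      exact hkp b hb.1 (by omega) hbk.symm
    · have hpn : p n ∈ U (n - 1) := by
        apply hall
        apply Finset.mem_image_of_mem
        rw [Finset.mem_Icc]; exact ⟨by omega, le_refl n⟩
      obtain ⟨b, hb, hbn⟩ := Finset.mem_image.mp hpn
      rw [Finset.mem_Icc] at hb
      have := hpinj b n hb.1 (by omega) (by omega) (le_refl n) hbn
      omega
  have hps := hpsub X Pw hXsub (Finset.subset_insert _ _) hXq
    (Or.inr (le_refl _)) hnq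
  have hmPw : h Pw ≤ h (X ∪ Pw) := hmono _ _ Finset.subset_union_right
  rw [hint] at hps
  have hchain := chain (n - 1) hn1 (by omega)
  have hU1 : U 1 = {p 1} := by
    simp [hUdef]
  have hcast : ((n - 1 : ℕ) : ℝ) = (n : ℝ) - 1 := by
    have : (1 : ℕ) ≤ n := by omega
    push_cast [Nat.cast_sub this]
    ring
  rw [hU1, hcast] at hchain
  show h X ≥ h {p 1} + ((n : ℝ) - 1)
  linarith
end

section
/- With P, Γ_n, and h as in the king-and-n-pawns setting (n ≥ 2), satisfying h(∅)=0, monotonicity, submodularity, and +-submodularity with respect to Γ_n: h({k, p_1}) + Σ_{i=2}^{n-1} h({p_i}) ≥ h({k, p_1, ..., p_{n-1}}) + (n - 2). -/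
theorem lemma_up {α : Type*} [DecidableEq α] (n : ℕ) (hn : 2 ≤ n)
    (k : α) (p : ℕ → α)
    (hkp : ∀ i, 1 ≤ i → i ≤ n → k ≠ p i)
    (hpinj : ∀ i j, 1 ≤ i → i ≤ n → 1 ≤ j → j ≤ n → p i = p j → i = j)
    (h : Finset α → ℝ)
    (h0 : h ∅ = 0)
    (hmono : ∀ X Y : Finset α, X ⊆ Y → h X ≤ h Y)
    (hsub : ∀ X Y : Finset α, h X + h Y ≥ h (X ∩ Y) + h (X ∪ Y))
    (hpsub : ∀ X Y : Finset α,
      X ⊆ insert k ((Finset.Icc 1 n).image p) →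
      Y ⊆ insert k ((Finset.Icc 1 n).image p) →
      Qualified n k p X → Qualified n k p Y → ¬ Qualified n k p (X ∩ Y) →
      h X + h Y ≥ h (X ∩ Y) + h (X ∪ Y) + 1) :
    h {k, p 1} + ∑ i ∈ Finset.Icc 2 (n - 1), h {p i}
      ≥ h (insert k ((Finset.Icc 1 (n - 1)).image p)) + ((n : ℝ) - 2) := by
  have key : ∀ j, 1 ≤ j → j ≤ n - 1 →
      h {k, p 1} + ∑ i ∈ Finset.Icc 2 j, h {p i}
        ≥ h (insert k ((Finset.Icc 1 j).image p)) + ((j : ℝ) - 1) := by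
    intro j hj1
    induction j, hj1 using Nat.le_induction with
    | base =>
        intro _
        have : Finset.Icc 2 1 = (∅ : Finset ℕ) := by decide
        simp [this, Finset.Icc_self]
    | succ j hj ih =>
        intro hle
        have hj' : j ≤ n - 1 := by omega
        have hjn : j + 1 ≤ n := by omega
        have ih' := ih hj'
        have hsumsucc : ∑ i ∈ Finset.Icc 2 (j + 1), h {p i}
            = (∑ i ∈ Finset.Icc 2 j, h {p i}) + h {p (j + 1)} := by
          rw [Finset.sum_Icc_succ_top (by omega : 2 ≤ j + 1)]
        set A : Finset α := insert k ((Finset.Icc 1 j).image p) with hA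
        have hXsub : A ⊆ insert k ((Finset.Icc 1 n).image p) := by
          apply Finset.insert_subset_insert
          exact Finset.image_subset_image (Finset.Icc_subset_Icc_right (by omega))
        have hYsub : ({k, p (j + 1)} : Finset α) ⊆ insert k ((Finset.Icc 1 n).image p) := by
          intro x hx
          simp only [Finset.mem_insert, Finset.mem_singleton] at hx
          rcases hx with rfl | rfl
          · exact Finset.mem_insert_self _ _
          · exact Finset.mem_insert_of_mem (Finset.mem_image.2 ⟨j + 1, by simp; omega, rfl⟩)
        have hp1A : p 1 ∈ A := by
          exact Finset.mem_insert_of_mem (Finset.mem_image.2 ⟨1, by simp; omega, rfl⟩)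
        have hXq : Qualified n k p A := by
          left; exact ⟨1, le_refl 1, by omega, Finset.mem_insert_self _ _, hp1A⟩
        have hYq : Qualified n k p {k, p (j + 1)} := by
          left; exact ⟨j + 1, by omega, hjn, by simp, by simp⟩
        have hinter : A ∩ ({k, p (j + 1)} : Finset α) = {k} := by
          ext x
          simp only [Finset.mem_inter, Finset.mem_insert, Finset.mem_singleton, hA,
            Finset.mem_image, Finset.mem_Icc]
          constructor
          · rintro ⟨hx1, hx2⟩
            rcases hx2 with rfl | rfl
            · rfl
            · rcases hx1 with hk | ⟨i, ⟨hi1, hi2⟩, hpi⟩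
              · exact hk
              · have := hpinj i (j + 1) hi1 (by omega) (by omega) hjn hpi
                omega
          · rintro rfl
            exact ⟨Or.inl rfl, Or.inl rfl⟩
        have hnotq : ¬ Qualified n k p ({k} : Finset α) := by
          rintro (⟨i, hi1, hi2, _, hpi⟩ | hsub')
          · exact hkp i hi1 hi2 (Finset.mem_singleton.1 hpi).symm
          · have : p 1 ∈ ({k} : Finset α) :=
              hsub' (Finset.mem_image.2 ⟨1, by simp; omega, rfl⟩)
            exact hkp 1 (le_refl 1) (by omega) (Finset.mem_singleton.1 this).symm
        have hunion : A ∪ ({k, p (j + 1)} : Finset α)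
            = insert k ((Finset.Icc 1 (j + 1)).image p) := by
          have : Finset.Icc 1 (j + 1) = insert (j + 1) (Finset.Icc 1 j) := by
            ext x; simp [Finset.mem_Icc]; omega
          rw [this, Finset.image_insert]
          ext x
          simp only [Finset.mem_union, Finset.mem_insert, Finset.mem_singleton, hA]
          tauto
        have main := hpsub A {k, p (j + 1)} hXsub hYsub hXq hYq (by rw [hinter]; exact hnotq)
        rw [hinter, hunion] at main
        have aux := hsub {k} {p (j + 1)}
        have hik : ({k} : Finset α) ∩ {p (j + 1)} = ∅ := by
          rw [Finset.singleton_inter_of_notMem]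
          simp [hkp (j + 1) (by omega) hjn]
        have huk : ({k} : Finset α) ∪ {p (j + 1)} = {k, p (j + 1)} := rfl
        rw [hik, huk, h0] at aux
        rw [hsumsucc]
        push_cast
        push_cast at ih'
        linarith
  have hfin := key (n - 1) (by omega) le_rfl
  have : ((n - 1 : ℕ) : ℝ) = (n : ℝ) - 1 := by
    have : (1 : ℕ) ≤ n := by omega
    push_cast [this]; ring
  rw [this] at hfin
  linarith
end

section
/- With P, Γ_n, and h as in the king-and-n-pawns setting (n ≥ 2), satisfying h(∅)=0, monotonicity, submodularity, and +-submodularity with respect to Γ_n: h({k}) + Σ_{i=2}^{n-1} h({p_i}) ≥ 2n - 3. -/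
theorem king_pawns_entropy_bound {α : Type*} [DecidableEq α] (n : ℕ) (hn : 2 ≤ n)
    (k : α) (p : ℕ → α)
    (hkp : ∀ i, 1 ≤ i → i ≤ n → k ≠ p i)
    (hpinj : ∀ i j, 1 ≤ i → i ≤ n → 1 ≤ j → j ≤ n → p i = p j → i = j)
    (h : Finset α → ℝ)
    (h0 : h ∅ = 0)
    (hmono : ∀ X Y : Finset α, X ⊆ Y → h X ≤ h Y)
    (hsub : ∀ X Y : Finset α, h X + h Y ≥ h (X ∩ Y) + h (X ∪ Y))
    (hpsub : ∀ X Y : Finset α,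
      X ⊆ insert k ((Finset.Icc 1 n).image p) →
      Y ⊆ insert k ((Finset.Icc 1 n).image p) →
      Qualified n k p X → Qualified n k p Y → ¬ Qualified n k p (X ∩ Y) →
      h X + h Y ≥ h (X ∩ Y) + h (X ∪ Y) + 1) :
    h {k} + ∑ i ∈ Finset.Icc 2 (n - 1), h {p i} ≥ 2 * (n : ℝ) - 3 := by
  set Q : Finset α := (Finset.Icc 1 n).image p with hQdef
  have hpQ : ∀ i, 1 ≤ i → i ≤ n → p i ∈ Q := fun i h1 h2 =>
    Finset.mem_image_of_mem p (Finset.mem_Icc.mpr ⟨h1, h2⟩)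
  have hkQ : k ∉ Q := by
    rw [hQdef]
    simp only [Finset.mem_image, Finset.mem_Icc]
    rintro ⟨i, ⟨h1, h2⟩, hpi⟩
    exact hkp i h1 h2 hpi.symm
  have himg_sub : ∀ s : Finset ℕ, s ⊆ Finset.Icc 1 n → s.image p ⊆ Q :=
    fun s hs => Finset.image_subset_image hs
  have img_inter : ∀ s t : Finset ℕ, s ⊆ Finset.Icc 1 n → t ⊆ Finset.Icc 1 n →
      (s.image p) ∩ (t.image p) = (s ∩ t).image p := by
    intro s t hs ht
    ext x
    simp only [Finset.mem_inter, Finset.mem_image]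
    constructor
    · rintro ⟨⟨a, ha, rfl⟩, ⟨b, hb, hba⟩⟩
      have ha' := Finset.mem_Icc.mp (hs ha)
      have hb' := Finset.mem_Icc.mp (ht hb)
      have hba' : b = a := hpinj b a hb'.1 hb'.2 ha'.1 ha'.2 hba
      subst hba'
      exact ⟨b, ⟨ha, hb⟩, rfl⟩
    · rintro ⟨a, ⟨h1, h2⟩, rfl⟩
      exact ⟨⟨a, h1, rfl⟩, ⟨a, h2, rfl⟩⟩
  have ins_inter : ∀ S T : Finset α, (insert k S) ∩ (insert k T) = insert k (S ∩ T) := by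
    intro S T; ext x
    simp only [Finset.mem_inter, Finset.mem_insert]
    tauto
  have ins_union : ∀ S T : Finset α, (insert k S) ∪ (insert k T) = insert k (S ∪ T) := by
    intro S T; ext x
    simp only [Finset.mem_union, Finset.mem_insert]
    tauto
  have inter_noK : ∀ S T : Finset α, k ∉ S → S ∩ insert k T = S ∩ T := by
    intro S T hk; ext x
    simp only [Finset.mem_inter, Finset.mem_insert]
    constructor
    · rintro ⟨hxS, (rfl | hxT)⟩
      · exact absurd hxS hk
      · exact ⟨hxS, hxT⟩
    · rintro ⟨hxS, hxT⟩; exact ⟨hxS, Or.inr hxT⟩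
  have qualk : ∀ (X : Finset α) (i : ℕ), 1 ≤ i → i ≤ n → k ∈ X → p i ∈ X →
      Qualified n k p X := fun X i h1 h2 hk hp => Or.inl ⟨i, h1, h2, hk, hp⟩
  have qualQ : ∀ X : Finset α, Q ⊆ X → Qualified n k p X := by
    intro X hX
    rw [hQdef] at hX
    exact Or.inr hX
  have notqual_pawns : ∀ (S : Finset α) (j : ℕ), S ⊆ Q → 1 ≤ j → j ≤ n → p j ∉ S →
      ¬ Qualified n k p S := by
    rintro S j hS h1 h2 hj (⟨i, hi1, hi2, hkS, _⟩ | hsub')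
    · exact hkQ (hS hkS)
    · rw [← hQdef] at hsub'
      exact hj (hsub' (hpQ j h1 h2))
  have notqual_k : ¬ Qualified n k p {k} := by
    rintro (⟨i, hi1, hi2, _, hpi⟩ | hsub')
    · exact hkp i hi1 hi2 (Finset.mem_singleton.mp hpi).symm
    · rw [← hQdef] at hsub'
      exact hkp 1 le_rfl (by omega)
        (Finset.mem_singleton.mp (hsub' (hpQ 1 le_rfl (by omega)))).symm
  -- Step 1: strict monotonicity at the top of the pawn lattice
  have qstep : ∀ j, 1 ≤ j → j ≤ n →
      h Q ≥ h (((Finset.Icc 1 n).erase j).image p) + 1 := by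
    intro j h1 h2
    set E : Finset α := ((Finset.Icc 1 n).erase j).image p with hEdef
    have hEQ : E ⊆ Q := himg_sub _ (Finset.erase_subset _ _)
    have hpjE : p j ∉ E := by
      rw [hEdef]
      simp only [Finset.mem_image, Finset.mem_erase, Finset.mem_Icc]
      rintro ⟨b, ⟨hbj, hb1, hb2⟩, hbp⟩
      exact hbj (hpinj b j hb1 hb2 h1 h2 hbp)
    obtain ⟨i, hi1, hi2, hij⟩ : ∃ i, 1 ≤ i ∧ i ≤ n ∧ i ≠ j := by
      rcases eq_or_ne j 1 with rfl | hj1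
      · exact ⟨2, one_le_two, hn, by omega⟩
      · exact ⟨1, le_rfl, by omega, fun hh => hj1 hh.symm⟩
    have hpiE : p i ∈ E := Finset.mem_image_of_mem p
      (Finset.mem_erase.mpr ⟨hij, Finset.mem_Icc.mpr ⟨hi1, hi2⟩⟩)
    have hXi : Q ∩ insert k E = E := by
      rw [inter_noK Q E hkQ]
      exact Finset.inter_eq_right.mpr hEQ
    have hps := hpsub Q (insert k E) (Finset.subset_insert k Q)
      (Finset.insert_subset_insert k hEQ)
      (qualQ Q (Finset.Subset.refl Q))
      (qualk _ i hi1 hi2 (Finset.mem_insert_self k E) (Finset.mem_insert_of_mem hpiE))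
      (by rw [hXi]; exact notqual_pawns E j hEQ h1 h2 hpjE)
    rw [hXi, Finset.union_insert, Finset.union_eq_left.mpr hEQ] at hps
    have hm := hmono (insert k E) (insert k Q) (Finset.insert_subset_insert k hEQ)
    linarith
  -- Step 2: adding any pawn to a set of pawns increases h by at least 1
  have step2 : ∀ (s : Finset ℕ) (j : ℕ), s ⊆ Finset.Icc 1 n → 1 ≤ j → j ≤ n → j ∉ s →
      h ((insert j s).image p) ≥ h (s.image p) + 1 := by
    intro s j hs h1 h2 hjs
    have hins : insert j s ⊆ Finset.Icc 1 n := by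
      intro x hx
      rcases Finset.mem_insert.mp hx with rfl | hx'
      · exact Finset.mem_Icc.mpr ⟨h1, h2⟩
      · exact hs hx'
    have hsub' := hsub ((insert j s).image p) (((Finset.Icc 1 n).erase j).image p)
    have hi : (insert j s).image p ∩ ((Finset.Icc 1 n).erase j).image p = s.image p := by
      rw [img_inter _ _ hins (Finset.erase_subset _ _)]
      congr 1
      apply Finset.Subset.antisymm
      · intro x hx
        rcases Finset.mem_inter.mp hx with ⟨hx1, hx2⟩
        rcases Finset.mem_insert.mp hx1 with rfl | hxs
        · exact absurd rfl (Finset.mem_erase.mp hx2).1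
        · exact hxs
      · intro x hxs
        refine Finset.mem_inter.mpr ⟨Finset.mem_insert_of_mem hxs,
          Finset.mem_erase.mpr ⟨?_, hs hxs⟩⟩
        rintro rfl; exact hjs hxs
    have hu : (insert j s).image p ∪ ((Finset.Icc 1 n).erase j).image p = Q := by
      rw [← Finset.image_union, hQdef]
      congr 1
      apply Finset.Subset.antisymm
      · intro x hx
        rcases Finset.mem_union.mp hx with hx | hx
        · exact hins hx
        · exact (Finset.erase_subset _ _) hx
      · intro x hx
        rcases eq_or_ne x j with rfl | hxj
        · exact Finset.mem_union_left _ (Finset.mem_insert_self _ _)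
        · exact Finset.mem_union_right _ (Finset.mem_erase.mpr ⟨hxj, hx⟩)
    rw [hi, hu] at hsub'
    have hq := qstep j h1 h2
    linarith
  -- Step 3: chain on initial segments of pawns
  have grow : ∀ m : ℕ, 1 ≤ m → m ≤ n - 1 →
      h ((Finset.Icc 1 m).image p) ≥ h {p 1} + ((m : ℝ) - 1) := by
    intro m
    induction m with
    | zero => intro h1 _; exact absurd h1 (by omega)
    | succ m ih =>
      intro _ hm2
      rcases Nat.eq_zero_or_pos m with rfl | hm
      · have h2 : (Finset.Icc 1 1).image p = {p 1} := by
          rw [Finset.Icc_self, Finset.image_singleton]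
        rw [h2]
        push_cast
        norm_num
      · have hmn : m ≤ n - 1 := by omega
        have hrec := ih hm hmn
        have hstep := step2 (Finset.Icc 1 m) (m + 1)
          (by intro x hx; rw [Finset.mem_Icc] at hx ⊢; omega)
          (by omega) (by omega)
          (by rw [Finset.mem_Icc]; omega)
        have hIcc : Finset.Icc 1 (m + 1) = insert (m + 1) (Finset.Icc 1 m) := by
          ext x; simp only [Finset.mem_Icc, Finset.mem_insert]; omega
        rw [← hIcc] at hstep
        push_cast
        linarith
  -- Step 4: h of the king plus the first n-1 pawns
  have hGW : h (insert k ((Finset.Icc 1 (n - 1)).image p)) ≥ h {p 1} + ((n : ℝ) - 1) := by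
    set W : Finset α := (Finset.Icc 1 (n - 1)).image p with hWdef
    have hWsub : Finset.Icc 1 (n - 1) ⊆ Finset.Icc 1 n := by
      intro x hx; rw [Finset.mem_Icc] at hx ⊢; omega
    have hWQ : W ⊆ Q := himg_sub _ hWsub
    have hpnW : p n ∉ W := by
      rw [hWdef]
      simp only [Finset.mem_image, Finset.mem_Icc]
      rintro ⟨b, ⟨hb1, hb2⟩, hbp⟩
      have := hpinj b n hb1 (by omega) (by omega) le_rfl hbp
      omega
    have hp1W : p 1 ∈ W := Finset.mem_image_of_mem p (Finset.mem_Icc.mpr ⟨le_rfl, by omega⟩)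
    have hXi : insert k W ∩ Q = W := by
      rw [Finset.inter_comm, inter_noK Q W hkQ]
      exact Finset.inter_eq_right.mpr hWQ
    have hps := hpsub (insert k W) Q (Finset.insert_subset_insert k hWQ)
      (Finset.subset_insert k Q)
      (qualk _ 1 le_rfl (by omega) (Finset.mem_insert_self k W) (Finset.mem_insert_of_mem hp1W))
      (qualQ Q (Finset.Subset.refl Q))
      (by rw [hXi]; exact notqual_pawns W n hWQ (by omega) le_rfl hpnW)
    rw [hXi, Finset.insert_union, Finset.union_eq_right.mpr hWQ] at hps
    have hm1 := hmono Q (insert k Q) (Finset.subset_insert k Q)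
    have hW := grow (n - 1) (by omega) le_rfl
    rw [← hWdef] at hW
    have hc : ((n - 1 : ℕ) : ℝ) = (n : ℝ) - 1 := by
      have : (1 : ℕ) ≤ n := by omega
      push_cast [this]
      ring
    rw [hc] at hW
    linarith
  -- Step 5: per-pawn bound
  have perpawn : ∀ i, 2 ≤ i → i ≤ n - 1 →
      h {p i} ≥ h (insert k {p 1, p i}) - h (insert k {p 1}) + 1 := by
    intro i hi2 hin
    have hi1 : 1 ≤ i := by omega
    have hinn : i ≤ n := by omega
    have hp1i : p 1 ≠ p i := fun hh => by
      have := hpinj 1 i le_rfl (by omega) hi1 hinn hh; omega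
    have hkpi : k ≠ p i := hkp i hi1 hinn
    have hs1 := hsub {k} {p i}
    have hks : ({k} : Finset α) ∩ {p i} = ∅ := by
      rw [Finset.singleton_inter_of_notMem]
      rw [Finset.mem_singleton]
      exact hkpi
    have hsu : ({k} : Finset α) ∪ {p i} = insert k {p i} := by ext x; simp
    rw [hks, h0, hsu] at hs1
    have hXi : insert k ({p 1} : Finset α) ∩ insert k {p i} = {k} := by
      rw [ins_inter, Finset.singleton_inter_of_notMem (by rw [Finset.mem_singleton]; exact hp1i)]
      simp
    have hXu : insert k ({p 1} : Finset α) ∪ insert k {p i} = insert k {p 1, p i} := by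
      ext x
      simp only [Finset.mem_union, Finset.mem_insert, Finset.mem_singleton]
      tauto
    have hps := hpsub (insert k {p 1}) (insert k {p i})
      (Finset.insert_subset_insert k (Finset.singleton_subset_iff.mpr (hpQ 1 le_rfl (by omega))))
      (Finset.insert_subset_insert k (Finset.singleton_subset_iff.mpr (hpQ i hi1 hinn)))
      (qualk _ 1 le_rfl (by omega) (Finset.mem_insert_self _ _)
        (Finset.mem_insert_of_mem (Finset.mem_singleton_self _)))
      (qualk _ i hi1 hinn (Finset.mem_insert_self _ _)
        (Finset.mem_insert_of_mem (Finset.mem_singleton_self _)))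
      (by rw [hXi]; exact notqual_k)
    rw [hXi, hXu] at hps
    linarith
  -- Step 6: telescoping
  have tele : ∀ m : ℕ, 1 ≤ m → m ≤ n - 1 →
      (∑ i ∈ Finset.Icc 2 m, (h (insert k {p 1, p i}) - h (insert k {p 1}))) ≥
        h (insert k ((Finset.Icc 1 m).image p)) - h (insert k {p 1}) := by
    intro m
    induction m with
    | zero => intro h1 _; exact absurd h1 (by omega)
    | succ m ih =>
      intro _ hm2
      rcases Nat.eq_zero_or_pos m with rfl | hm
      · have h1 : Finset.Icc 2 1 = (∅ : Finset ℕ) := Finset.Icc_eq_empty (by omega)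
        have h2 : (Finset.Icc 1 1).image p = {p 1} := by
          rw [Finset.Icc_self, Finset.image_singleton]
        rw [h1, h2, Finset.sum_empty]
        linarith
      · have hmn : m ≤ n - 1 := by omega
        have hrec := ih hm hmn
        have hIcc2 : Finset.Icc 2 (m + 1) = insert (m + 1) (Finset.Icc 2 m) := by
          ext x; simp only [Finset.mem_Icc, Finset.mem_insert]; omega
        have hnotmem : (m + 1) ∉ Finset.Icc 2 m := by
          rw [Finset.mem_Icc]; omega
        rw [hIcc2, Finset.sum_insert hnotmem]
        have hsub1 : Finset.Icc 1 m ⊆ Finset.Icc 1 n := by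
          intro x hx; rw [Finset.mem_Icc] at hx ⊢; omega
        have hsub2 : ({1, m + 1} : Finset ℕ) ⊆ Finset.Icc 1 n := by
          intro x hx
          rcases Finset.mem_insert.mp hx with rfl | hx'
          · rw [Finset.mem_Icc]; omega
          · rw [Finset.mem_singleton.mp hx', Finset.mem_Icc]; omega
        have hpair : ({p 1, p (m + 1)} : Finset α) = ({1, m + 1} : Finset ℕ).image p := by
          rw [Finset.image_insert, Finset.image_singleton]
        have hsm := hsub (insert k ((Finset.Icc 1 m).image p)) (insert k {p 1, p (m + 1)})
        have hi : insert k ((Finset.Icc 1 m).image p) ∩ insert k {p 1, p (m + 1)} =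
            insert k {p 1} := by
          rw [hpair, ins_inter, img_inter _ _ hsub1 hsub2]
          have hI : Finset.Icc 1 m ∩ ({1, m + 1} : Finset ℕ) = {1} := by
            ext x
            simp only [Finset.mem_inter, Finset.mem_Icc, Finset.mem_insert, Finset.mem_singleton]
            omega
          rw [hI, Finset.image_singleton]
        have hu : insert k ((Finset.Icc 1 m).image p) ∪ insert k {p 1, p (m + 1)} =
            insert k ((Finset.Icc 1 (m + 1)).image p) := by
          rw [hpair, ins_union, ← Finset.image_union]
          have hU : Finset.Icc 1 m ∪ ({1, m + 1} : Finset ℕ) = Finset.Icc 1 (m + 1) := by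
            ext x
            simp only [Finset.mem_union, Finset.mem_Icc, Finset.mem_insert, Finset.mem_singleton]
            omega
          rw [hU]
        rw [hi, hu] at hsm
        linarith
  -- assemble
  have hb : ∀ i ∈ Finset.Icc 2 (n - 1),
      (h (insert k {p 1, p i}) - h (insert k {p 1}) + 1) ≤ h {p i} := by
    intro i hi
    rw [Finset.mem_Icc] at hi
    exact perpawn i hi.1 hi.2
  have hs' := Finset.sum_le_sum hb
  rw [Finset.sum_add_distrib, Finset.sum_const] at hs'
  have hcard : (Finset.Icc 2 (n - 1)).card = n - 2 := by
    rw [Nat.card_Icc]; omega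
  rw [hcard, nsmul_eq_mul, mul_one] at hs'
  have hc2 : ((n - 2 : ℕ) : ℝ) = (n : ℝ) - 2 := by
    have : (2 : ℕ) ≤ n := hn
    push_cast [this]
    ring
  rw [hc2] at hs'
  have htel := tele (n - 1) (by omega) le_rfl
  have hfin := hsub {k} {p 1}
  have hkp1 : ({k} : Finset α) ∩ {p 1} = ∅ := by
    rw [Finset.singleton_inter_of_notMem]
    rw [Finset.mem_singleton]
    exact hkp 1 le_rfl (by omega)
  have hsu1 : ({k} : Finset α) ∪ {p 1} = insert k {p 1} := by ext x; simp
  rw [hkp1, h0, hsu1] at hfin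
  linarith
end

section
/- With P, Γ_n, and h as in the king-and-n-pawns setting (n ≥ 2) satisfying h(∅)=0, monotonicity, submodularity, and +-submodularity: there exists a participant x ∈ {k, p_2, ..., p_{n-1}} with h({x}) ≥ (2n-3)/(n-1). Consequently, if every participant x ∈ P satisfies h({x}) > 0, then min over x ∈ P of 1/h({x}) is at most (n-1)/(2n-3). -/
theorem king_pawns_rate_upper_bound {α : Type*} [DecidableEq α] (n : ℕ) (hn : 2 ≤ n)
    (k : α) (p : ℕ → α)
    (hkp : ∀ i, 1 ≤ i → i ≤ n → k ≠ p i)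
    (hpinj : ∀ i j, 1 ≤ i → i ≤ n → 1 ≤ j → j ≤ n → p i = p j → i = j)
    (h : Finset α → ℝ)
    (h0 : h ∅ = 0)
    (hmono : ∀ X Y : Finset α, X ⊆ Y → h X ≤ h Y)
    (hsub : ∀ X Y : Finset α, h X + h Y ≥ h (X ∩ Y) + h (X ∪ Y))
    (hpsub : ∀ X Y : Finset α,
      X ⊆ insert k ((Finset.Icc 1 n).image p) →
      Y ⊆ insert k ((Finset.Icc 1 n).image p) →
      Qualified n k p X → Qualified n k p Y → ¬ Qualified n k p (X ∩ Y) →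
      h X + h Y ≥ h (X ∩ Y) + h (X ∪ Y) + 1) :
    (∃ x ∈ insert k ((Finset.Icc 2 (n - 1)).image p),
        h {x} ≥ (2 * (n : ℝ) - 3) / ((n : ℝ) - 1)) ∧
    ((∀ x ∈ insert k ((Finset.Icc 1 n).image p), h {x} > 0) →
      (insert k ((Finset.Icc 1 n).image p)).inf'
          (Finset.insert_nonempty _ _) (fun x => 1 / h {x})
        ≤ ((n : ℝ) - 1) / (2 * (n : ℝ) - 3)) := by
  have hn1 : 1 ≤ n := by omega
  have hnR : (2 : ℝ) ≤ (n : ℝ) := by exact_mod_cast hn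
  -- index-level injectivity
  have hpinj' : ∀ {i j : ℕ}, i ∈ Finset.Icc 1 n → j ∈ Finset.Icc 1 n → p i = p j → i = j := by
    intro i j hi hj hij
    simp only [Finset.mem_Icc] at hi hj
    exact hpinj i j hi.1 hi.2 hj.1 hj.2 hij
  have hknot : ∀ S : Finset ℕ, S ⊆ Finset.Icc 1 n → k ∉ S.image p := by
    intro S hS hk
    obtain ⟨i, hi, hik⟩ := Finset.mem_image.mp hk
    have hi' := hS hi
    simp only [Finset.mem_Icc] at hi'
    exact hkp i hi'.1 hi'.2 hik.symm
  have himg_inter : ∀ S T : Finset ℕ, S ⊆ Finset.Icc 1 n → T ⊆ Finset.Icc 1 n →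
      S.image p ∩ T.image p = (S ∩ T).image p := by
    intro S T hS hT
    ext x
    simp only [Finset.mem_inter, Finset.mem_image]
    constructor
    · rintro ⟨⟨a, ha, rfl⟩, ⟨b, hb, hba⟩⟩
      have hba' : b = a := hpinj' (hT hb) (hS ha) hba
      subst hba'
      exact ⟨b, ⟨ha, hb⟩, rfl⟩
    · rintro ⟨a, ha, rfl⟩
      exact ⟨⟨a, ha.1, rfl⟩, ⟨a, ha.2, rfl⟩⟩
  have hins_inter : ∀ A B : Finset α, insert k A ∩ insert k B = insert k (A ∩ B) := by
    intro A B
    ext x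
    by_cases hx : x = k <;> simp [hx]
  have hins_union : ∀ A B : Finset α, insert k A ∪ insert k B = insert k (A ∪ B) := by
    intro A B
    ext x
    by_cases hx : x = k <;> simp [hx]
  -- qualified / unqualified lemmas
  have hqualG : ∀ (S : Finset ℕ) (i : ℕ), i ∈ S → 1 ≤ i → i ≤ n →
      Qualified n k p (insert k (S.image p)) := by
    intro S i hiS h1 h2
    exact Or.inl ⟨i, h1, h2, Finset.mem_insert_self _ _,
      Finset.mem_insert_of_mem (Finset.mem_image_of_mem p hiS)⟩
  have hqualPw : Qualified n k p ((Finset.Icc 1 n).image p) := Or.inr le_rfl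
  have hunqualF : ∀ (S : Finset ℕ) (m : ℕ), S ⊆ Finset.Icc 1 n → m ∈ Finset.Icc 1 n → m ∉ S →
      ¬ Qualified n k p (S.image p) := by
    intro S m hS hm hmS hq
    rcases hq with ⟨i, _, _, hk', _⟩ | hsub'
    · exact hknot S hS hk'
    · have hpm : p m ∈ S.image p := hsub' (Finset.mem_image_of_mem p hm)
      obtain ⟨j, hj, hjm⟩ := Finset.mem_image.mp hpm
      have : j = m := hpinj' (hS hj) hm hjm
      exact hmS (this ▸ hj)
  have hunqualK : ¬ Qualified n k p {k} := by
    intro hq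
    rcases hq with ⟨i, h1, h2, _, hpi⟩ | hsub'
    · exact hkp i h1 h2 (Finset.mem_singleton.mp hpi).symm
    · have hp1 : p 1 ∈ ({k} : Finset α) :=
        hsub' (Finset.mem_image_of_mem p (by simp [Finset.mem_Icc]; omega))
      exact hkp 1 le_rfl hn1 (Finset.mem_singleton.mp hp1).symm
  have hGsub : ∀ S : Finset ℕ, S ⊆ Finset.Icc 1 n →
      insert k (S.image p) ⊆ insert k ((Finset.Icc 1 n).image p) :=
    fun S hS => Finset.insert_subset_insert _ (Finset.image_subset_image hS)
  -- Step 1: for 2 ≤ i ≤ n-1,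
  -- h {p i} ≥ h (C i) - h (C (i-1)) + 1 where C i = insert k ((insert n (Icc 2 i)).image p)
  have hstep1 : ∀ i : ℕ, 2 ≤ i → i ≤ n - 1 →
      h {p i} ≥ h (insert k ((insert n (Finset.Icc 2 i)).image p))
        - h (insert k ((insert n (Finset.Icc 2 (i - 1))).image p)) + 1 := by
    intro i h2i hin
    have hS : ({i} : Finset ℕ) ⊆ Finset.Icc 1 n := by
      simp [Finset.singleton_subset_iff, Finset.mem_Icc]; omega
    have hT : insert n (Finset.Icc 2 (i - 1)) ⊆ Finset.Icc 1 n := by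
      intro a ha
      simp only [Finset.mem_insert, Finset.mem_Icc] at ha ⊢
      omega
    have hidx_inter : ({i} : Finset ℕ) ∩ insert n (Finset.Icc 2 (i - 1)) = ∅ := by
      ext a
      simp only [Finset.mem_inter, Finset.mem_singleton, Finset.mem_insert, Finset.mem_Icc,
        Finset.notMem_empty, iff_false, not_and]
      omega
    have hidx_union : ({i} : Finset ℕ) ∪ insert n (Finset.Icc 2 (i - 1)) =
        insert n (Finset.Icc 2 i) := by
      ext a
      simp only [Finset.mem_union, Finset.mem_singleton, Finset.mem_insert, Finset.mem_Icc]
      omega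
    have hXY : insert k (({i} : Finset ℕ).image p) ∩
        insert k ((insert n (Finset.Icc 2 (i - 1))).image p) = {k} := by
      rw [hins_inter, himg_inter _ _ hS hT, hidx_inter]
      simp
    have hXYu : insert k (({i} : Finset ℕ).image p) ∪
        insert k ((insert n (Finset.Icc 2 (i - 1))).image p) =
        insert k ((insert n (Finset.Icc 2 i)).image p) := by
      rw [hins_union, ← Finset.image_union, hidx_union]
    have hps := hpsub (insert k (({i} : Finset ℕ).image p))
      (insert k ((insert n (Finset.Icc 2 (i - 1))).image p))
      (hGsub _ hS) (hGsub _ hT)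
      (hqualG _ i (Finset.mem_singleton_self i) (by omega) (by omega))
      (hqualG _ n (Finset.mem_insert_self _ _) hn1 le_rfl)
      (by rw [hXY]; exact hunqualK)
    rw [hXY, hXYu] at hps
    have him : ({i} : Finset ℕ).image p = {p i} := Finset.image_singleton p i
    rw [him] at hps
    have h2 := hsub {k} {p i}
    have hki : k ∉ ({p i} : Finset α) := by
      simp only [Finset.mem_singleton]
      exact hkp i (by omega) (by omega)
    have hu : ({k} : Finset α) ∪ {p i} = {k, p i} := by ext y; simp
    rw [Finset.singleton_inter_of_notMem hki, hu, h0] at h2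
    linarith
  -- Claim A (telescoping step 1)
  have claimA : ∀ m : ℕ, 1 ≤ m → m ≤ n - 1 →
      ∑ i ∈ Finset.Icc 2 m, h {p i}
        ≥ h (insert k ((insert n (Finset.Icc 2 m)).image p))
          - h (insert k ((insert n (Finset.Icc 2 1)).image p)) + ((m : ℝ) - 1) := by
    intro m hm1
    induction m, hm1 using Nat.le_induction with
    | base =>
      intro _
      have : Finset.Icc 2 1 = (∅ : Finset ℕ) := by
        apply Finset.Icc_eq_empty; omega
      rw [this]
      simp
    | succ m hm ih =>
      intro hmn
      have ihr := ih (by omega)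
      have hs1 := hstep1 (m + 1) (by omega) hmn
      rw [Finset.sum_Icc_succ_top (by omega : 2 ≤ m + 1)]
      simp only [Nat.add_sub_cancel] at hs1
      push_cast
      linarith
  -- Step 6 (plain submodular telescoping ingredient)
  have hstep6 : ∀ j : ℕ, j + 1 ≤ n →
      h (((Finset.Icc 1 n).erase (j + 1)).image p) + h ((Finset.Icc (j + 1) n).image p)
        ≥ h ((Finset.Icc (j + 2) n).image p) + h ((Finset.Icc 1 n).image p) := by
    intro j hj
    have hS : (Finset.Icc 1 n).erase (j + 1) ⊆ Finset.Icc 1 n := Finset.erase_subset _ _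
    have hT : Finset.Icc (j + 1) n ⊆ Finset.Icc 1 n := by
      intro a ha
      simp only [Finset.mem_Icc] at ha ⊢
      omega
    have hi : ((Finset.Icc 1 n).erase (j + 1)) ∩ Finset.Icc (j + 1) n =
        Finset.Icc (j + 2) n := by
      ext a
      simp only [Finset.mem_inter, Finset.mem_erase, Finset.mem_Icc]
      omega
    have hu : ((Finset.Icc 1 n).erase (j + 1)) ∪ Finset.Icc (j + 1) n = Finset.Icc 1 n := by
      ext a
      simp only [Finset.mem_union, Finset.mem_erase, Finset.mem_Icc]
      omega
    have h2 := hsub (((Finset.Icc 1 n).erase (j + 1)).image p) ((Finset.Icc (j + 1) n).image p)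
    rw [himg_inter _ _ hS hT, ← Finset.image_union, hi, hu] at h2
    exact h2
  -- Claim B (telescoping step 6)
  have claimB : ∀ j : ℕ, 1 ≤ j → j ≤ n - 1 →
      ∑ i ∈ Finset.Icc 1 j, h (((Finset.Icc 1 n).erase i).image p)
        ≥ ((j : ℝ) - 1) * h ((Finset.Icc 1 n).image p) + h ((Finset.Icc (j + 1) n).image p) := by
    intro j hj1
    induction j, hj1 using Nat.le_induction with
    | base =>
      intro _
      have h12 : (Finset.Icc 1 n).erase 1 = Finset.Icc 2 n := by
        ext a
        simp only [Finset.mem_erase, Finset.mem_Icc]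
        omega
      rw [Finset.Icc_self, Finset.sum_singleton, h12]
      norm_num
    | succ j hj ih =>
      intro hjn
      have ihr := ih (by omega)
      have hs6 := hstep6 j (by omega)
      rw [Finset.sum_Icc_succ_top (by omega : 1 ≤ j + 1)]
      push_cast
      linarith
  -- Step 5: h Pw ≥ h (Pw \ {p i}) + 1 for 2 ≤ i ≤ n-1
  have hknotPw : k ∉ (Finset.Icc 1 n).image p := hknot _ le_rfl
  have hstep5 : ∀ i : ℕ, 2 ≤ i → i ≤ n - 1 →
      h ((Finset.Icc 1 n).image p) ≥ h (((Finset.Icc 1 n).erase i).image p) + 1 := by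
    intro i h2i hin
    have hS : (Finset.Icc 1 n).erase i ⊆ Finset.Icc 1 n := Finset.erase_subset _ _
    have hAP : ((Finset.Icc 1 n).erase i).image p ⊆ (Finset.Icc 1 n).image p :=
      Finset.image_subset_image hS
    have hXY : insert k (((Finset.Icc 1 n).erase i).image p) ∩ (Finset.Icc 1 n).image p =
        ((Finset.Icc 1 n).erase i).image p := by
      rw [Finset.insert_inter_of_notMem hknotPw]
      exact Finset.inter_eq_left.mpr hAP
    have hXYu : insert k (((Finset.Icc 1 n).erase i).image p) ∪ (Finset.Icc 1 n).image p =
        insert k ((Finset.Icc 1 n).image p) := by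
      rw [Finset.insert_union, Finset.union_eq_right.mpr hAP]
    have h1e : 1 ∈ (Finset.Icc 1 n).erase i := by
      simp only [Finset.mem_erase, Finset.mem_Icc]
      omega
    have hiIcc : i ∈ Finset.Icc 1 n := by simp only [Finset.mem_Icc]; omega
    have hps := hpsub (insert k (((Finset.Icc 1 n).erase i).image p)) ((Finset.Icc 1 n).image p)
      (hGsub _ hS) (Finset.subset_insert _ _)
      (hqualG _ 1 h1e le_rfl hn1) hqualPw
      (by rw [hXY]; exact hunqualF _ i hS hiIcc (Finset.notMem_erase i _))
    rw [hXY, hXYu] at hps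
    have hm1 := hmono (insert k (((Finset.Icc 1 n).erase i).image p))
      (insert k ((Finset.Icc 1 n).image p)) (hGsub _ hS)
    linarith
  -- Step 4: h (insert k (Icc 2 n).image p) ≥ h ((Icc 2 n).image p) + 1
  have hS2n : Finset.Icc 2 n ⊆ Finset.Icc 1 n := by
    intro a ha
    simp only [Finset.mem_Icc] at ha ⊢
    omega
  have hstep4 : h (insert k ((Finset.Icc 2 n).image p)) ≥ h ((Finset.Icc 2 n).image p) + 1 := by
    have hAP : (Finset.Icc 2 n).image p ⊆ (Finset.Icc 1 n).image p :=
      Finset.image_subset_image hS2n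
    have hXY : insert k ((Finset.Icc 2 n).image p) ∩ (Finset.Icc 1 n).image p =
        (Finset.Icc 2 n).image p := by
      rw [Finset.insert_inter_of_notMem hknotPw]
      exact Finset.inter_eq_left.mpr hAP
    have hXYu : insert k ((Finset.Icc 2 n).image p) ∪ (Finset.Icc 1 n).image p =
        insert k ((Finset.Icc 1 n).image p) := by
      rw [Finset.insert_union, Finset.union_eq_right.mpr hAP]
    have h1Icc : (1 : ℕ) ∈ Finset.Icc 1 n := by simp only [Finset.mem_Icc]; omega
    have hps := hpsub (insert k ((Finset.Icc 2 n).image p)) ((Finset.Icc 1 n).image p)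
      (hGsub _ hS2n) (Finset.subset_insert _ _)
      (hqualG _ n (by simp only [Finset.mem_Icc]; omega) hn1 le_rfl) hqualPw
      (by rw [hXY]; exact hunqualF _ 1 hS2n h1Icc (by simp only [Finset.mem_Icc]; omega))
    rw [hXY, hXYu] at hps
    have hm1 := hmono ((Finset.Icc 1 n).image p) (insert k ((Finset.Icc 1 n).image p))
      (Finset.subset_insert _ _)
    linarith
  -- Step 3: h {k} + h {p n} ≥ h (insert k {p n})
  have hstep3 : h {k} + h {p n} ≥ h (insert k ({p n} : Finset α)) := by
    have h2 := hsub {k} {p n}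
    have hki : k ∉ ({p n} : Finset α) := by
      simp only [Finset.mem_singleton]
      exact hkp n hn1 le_rfl
    have hu : ({k} : Finset α) ∪ {p n} = {k, p n} := by ext y; simp
    rw [Finset.singleton_inter_of_notMem hki, hu, h0] at h2
    linarith
  -- Assemble: bound on h (((Icc 1 n).erase 1).image p)
  have hcard2 : (Finset.Icc 2 (n - 1)).card = n - 2 := by
    rw [Nat.card_Icc]; omega
  have hsum5 : ∑ i ∈ Finset.Icc 2 (n - 1), h (((Finset.Icc 1 n).erase i).image p)
      ≤ ((n : ℝ) - 2) * (h ((Finset.Icc 1 n).image p) - 1) := by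
    calc ∑ i ∈ Finset.Icc 2 (n - 1), h (((Finset.Icc 1 n).erase i).image p)
        ≤ ∑ _i ∈ Finset.Icc 2 (n - 1), (h ((Finset.Icc 1 n).image p) - 1) := by
          apply Finset.sum_le_sum
          intro i hi
          simp only [Finset.mem_Icc] at hi
          have := hstep5 i hi.1 hi.2
          linarith
      _ = ((n : ℝ) - 2) * (h ((Finset.Icc 1 n).image p) - 1) := by
          rw [Finset.sum_const, hcard2, nsmul_eq_mul]
          congr 1
          push_cast [Nat.cast_sub hn]
          ring
  have hsplit : Finset.Icc 1 (n - 1) = insert 1 (Finset.Icc 2 (n - 1)) := by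
    ext a
    simp only [Finset.mem_insert, Finset.mem_Icc]
    omega
  have h1not : (1 : ℕ) ∉ Finset.Icc 2 (n - 1) := by
    simp only [Finset.mem_Icc]; omega
  have hB := claimB (n - 1) (by omega) le_rfl
  rw [hsplit, Finset.sum_insert h1not] at hB
  have hn11 : n - 1 + 1 = n := by omega
  rw [hn11, Finset.Icc_self, Finset.image_singleton] at hB
  have hcastn1 : ((n - 1 : ℕ) : ℝ) = (n : ℝ) - 1 := by
    push_cast [Nat.cast_sub hn1]; ring
  rw [hcastn1] at hB
  have h12 : (Finset.Icc 1 n).erase 1 = Finset.Icc 2 n := by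
    ext a
    simp only [Finset.mem_erase, Finset.mem_Icc]
    omega
  rw [h12] at hB
  -- h ((Icc 2 n).image p) ≥ h {p n} + (n - 2)
  have h7 : h ((Finset.Icc 2 n).image p) ≥ h ({p n} : Finset α) + ((n : ℝ) - 2) := by
    linarith
  -- Claim A specialized at m = n - 1
  have hA := claimA (n - 1) (by omega) le_rfl
  have hidA1 : insert n (Finset.Icc 2 (n - 1)) = Finset.Icc 2 n := by
    ext a
    simp only [Finset.mem_insert, Finset.mem_Icc]
    omega
  have hidA2 : insert n (Finset.Icc 2 1) = ({n} : Finset ℕ) := by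
    have : Finset.Icc 2 1 = (∅ : Finset ℕ) := by
      apply Finset.Icc_eq_empty; omega
    rw [this]; rfl
  rw [hidA1, hidA2, Finset.image_singleton, hcastn1] at hA
  -- Main sum bound
  have hmain : h {k} + ∑ i ∈ Finset.Icc 2 (n - 1), h {p i} ≥ 2 * (n : ℝ) - 3 := by
    linarith
  -- Part 1: existence
  have hsubT : Finset.Icc 2 (n - 1) ⊆ Finset.Icc 1 n := by
    intro a ha
    simp only [Finset.mem_Icc] at ha ⊢
    omega
  have hknotT : k ∉ (Finset.Icc 2 (n - 1)).image p := hknot _ hsubT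
  have hsumT : ∑ x ∈ insert k ((Finset.Icc 2 (n - 1)).image p), h {x}
      = h {k} + ∑ i ∈ Finset.Icc 2 (n - 1), h {p i} := by
    rw [Finset.sum_insert hknotT, Finset.sum_image]
    intro x hx y hy hxy
    exact hpinj' (hsubT hx) (hsubT hy) hxy
  have hcardT : ((insert k ((Finset.Icc 2 (n - 1)).image p)).card : ℝ) = (n : ℝ) - 1 := by
    rw [Finset.card_insert_of_notMem hknotT, Finset.card_image_of_injOn, hcard2]
    · push_cast [Nat.cast_sub hn]; ring
    · intro x hx y hy hxy
      exact hpinj' (hsubT hx) (hsubT hy) hxy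
  have hbound_pos : (0 : ℝ) < (2 * (n : ℝ) - 3) / ((n : ℝ) - 1) := by
    apply div_pos <;> linarith
  have hex : ∃ x ∈ insert k ((Finset.Icc 2 (n - 1)).image p),
      h {x} ≥ (2 * (n : ℝ) - 3) / ((n : ℝ) - 1) := by
    by_contra hcon
    push_neg at hcon
    have hlt : ∑ x ∈ insert k ((Finset.Icc 2 (n - 1)).image p), h {x}
        < ∑ _x ∈ insert k ((Finset.Icc 2 (n - 1)).image p),
            (2 * (n : ℝ) - 3) / ((n : ℝ) - 1) :=
      Finset.sum_lt_sum_of_nonempty (Finset.insert_nonempty _ _) hcon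
    rw [Finset.sum_const, nsmul_eq_mul, hcardT] at hlt
    have hne : (n : ℝ) - 1 ≠ 0 := by linarith
    have heq : ((n : ℝ) - 1) * ((2 * (n : ℝ) - 3) / ((n : ℝ) - 1)) = 2 * (n : ℝ) - 3 := by
      rw [mul_comm]; exact div_mul_cancel₀ _ hne
    rw [heq] at hlt
    rw [hsumT] at hlt
    linarith
  refine ⟨hex, fun _hall => ?_⟩
  obtain ⟨x, hxT, hxge⟩ := hex
  have hmem : x ∈ insert k ((Finset.Icc 1 n).image p) := by
    rcases Finset.mem_insert.mp hxT with hx | hx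
    · exact hx ▸ Finset.mem_insert_self _ _
    · exact Finset.mem_insert_of_mem ((Finset.image_subset_image hsubT) hx)
  have hinf := Finset.inf'_le (s := insert k ((Finset.Icc 1 n).image p))
    (fun y => 1 / h {y}) hmem
  have h1d : 1 / h {x} ≤ ((n : ℝ) - 1) / (2 * (n : ℝ) - 3) := by
    have := one_div_le_one_div_of_le hbound_pos hxge
    rwa [one_div_div] at this
  exact le_trans hinf h1d
end
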